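/- Let (A, G, α) be a C*-dynamical system where A is a unital C*-algebra with unitary group U, and G is a discrete group admitting a left G-invariant bounded functional m_G on ℓ^∞(G) with m_G(1) = 1. Let E be a Banach ℓ¹(G,A;α)-bimodule and D : ℓ¹(G,A;α) → E* a bounded derivation. Let F_{D,U} ⊆ ℓ^∞(U) be the span of the constant 1 and the functions φ_{x,D}(u) = ⟨x, Du·u⁻¹⟩ for x ∈ E. If there exists a left U-invariant bounded functional m on F_{D,U} with m(1) = 1, then D is an inner derivation of ℓ¹(G,A;α): there is ξ* ∈ E* with Da = a·ξ* − ξ*·a for all a ∈ ℓ¹(G,A;α). -/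

import Mathlib

instance : Fact ((1 : ENNReal) ≤ 1) := ⟨le_rfl⟩

open BoundedContinuousFunction

/-- A Banach `B`-bimodule: bilinear, mutually commuting left and right actions of the
normed algebra `B` on a Banach space `E` satisfying the usual norm estimates. -/
structure AlgBimodule (B E : Type*) [NonUnitalNormedRing B] [NormedSpace ℂ B]
    [NormedAddCommGroup E] [NormedSpace ℂ E] where
  l : B →ₗ[ℂ] E →L[ℂ] E
  r : B →ₗ[ℂ] E →L[ℂ] E
  l_mul : ∀ a b : B, l (a * b) = (l a).comp (l b)
  r_mul : ∀ a b : B, r (a * b) = (r b).comp (r a)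
  lr_comm : ∀ a b : B, ∀ x : E, l a (r b x) = r b (l a x)
  bound : ∃ K : ℝ, 0 ≤ K ∧ ∀ (a : B) (x : E),
    ‖l a x‖ ≤ K * ‖a‖ * ‖x‖ ∧ ‖r a x‖ ≤ K * ‖a‖ * ‖x‖

/-- `F_{D,U}`: span of the constant `1` and the functions `φ_{x,D}` on the unitary
group `U` of `A`. -/
noncomputable def FDU {A B E : Type*}
    [NormedRing A] [StarRing A] [CStarRing A] [NormedAlgebra ℂ A] [CompleteSpace A]
    [NormedRing B] [NormedAlgebra ℂ B]
    [NormedAddCommGroup E] [NormedSpace ℂ E]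
    (ιA : A →ₗ[ℂ] B) (M : AlgBimodule B E) (D : B →L[ℂ] (E →L[ℂ] ℂ)) :
    Submodule ℂ (unitary A → ℂ) :=
  Submodule.span ℂ (insert (fun _ => (1 : ℂ))
    {f : unitary A → ℂ | ∃ x : E,
      f = fun u : unitary A => D (ιA (↑u : A)) (M.l (ιA ((↑(u⁻¹) : A))) x)})


/-!
Johnson's averaging argument, run twice. Subtracting the inner derivation implemented by
`2·(D 1)·1 - D 1` replaces `D` by its corner `b ↦ D b ∘ (1·_·1)`, which lives on the essential part
of the (possibly non-unital) module. For such a derivation and a multiplicative `σ : S → B`, the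
average `ξ x = μ(s ↦ ⟨σ s⁻¹·x, D (σ s)⟩)` over a left invariant mean `μ` satisfies a cocycle
identity which says exactly that `D (σ s)` is the inner derivation of `-ξ`.
Over the unitary group of `A` this makes the corner inner on `A`, because unitaries span a
C*-algebra. What is left vanishes on `A`, so its average over `G` is `A`-central; it is then
inner on every `a δ_g`, and these span a dense subspace of `ℓ¹(G,A;α)`.
-/

namespace AlgBimodule

variable {B E : Type*} [NormedRing B] [NormedAlgebra ℂ B] [NormedAddCommGroup E] [NormedSpace ℂ E]
  (M : AlgBimodule B E)

lemma l_mul_apply (a b : B) (x : E) : M.l (a * b) x = M.l a (M.l b x) := by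
  rw [M.l_mul]; rfl

lemma r_mul_apply (a b : B) (x : E) : M.r (a * b) x = M.r b (M.r a x) := by
  rw [M.r_mul]; rfl

lemma l_l_one (b : B) (x : E) : M.l b (M.l 1 x) = M.l b x := by
  rw [← l_mul_apply, mul_one]

lemma l_one_l (b : B) (x : E) : M.l 1 (M.l b x) = M.l b x := by
  rw [← l_mul_apply, one_mul]

lemma r_r_one (b : B) (x : E) : M.r b (M.r 1 x) = M.r b x := by
  rw [← r_mul_apply, one_mul]

lemma r_one_r (b : B) (x : E) : M.r 1 (M.r b x) = M.r b x := by
  rw [← r_mul_apply, mul_one]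

lemma exists_bound_l : ∃ K : ℝ, ∀ a : B, ‖M.l a‖ ≤ K * ‖a‖ := by
  obtain ⟨K, hK, hb⟩ := M.bound
  exact ⟨K, fun a => ContinuousLinearMap.opNorm_le_bound _ (by positivity) fun x => (hb a x).1⟩

lemma exists_bound_r : ∃ K : ℝ, ∀ a : B, ‖M.r a‖ ≤ K * ‖a‖ := by
  obtain ⟨K, hK, hb⟩ := M.bound
  exact ⟨K, fun a => ContinuousLinearMap.opNorm_le_bound _ (by positivity) fun x => (hb a x).2⟩

noncomputable def ad (ξ : E →L[ℂ] ℂ) : B →L[ℂ] E →L[ℂ] ℂ :=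
  ContinuousLinearMap.compL ℂ E E ℂ ξ ∘L
    (M.r.mkContinuousOfExistsBound M.exists_bound_r -
      M.l.mkContinuousOfExistsBound M.exists_bound_l)

@[simp]
lemma ad_apply (ξ : E →L[ℂ] ℂ) (b : B) (x : E) : M.ad ξ b x = ξ (M.r b x) - ξ (M.l b x) := by
  simp [ad]

lemma ad_add (ξ η : E →L[ℂ] ℂ) : M.ad (ξ + η) = M.ad ξ + M.ad η := by
  ext b x; simp; ring

def IsDerivation (D : B →L[ℂ] E →L[ℂ] ℂ) : Prop :=
  ∀ (a b : B) (x : E), D (a * b) x = D a (M.l b x) + D b (M.r a x)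

lemma isDerivation_ad (ξ : E →L[ℂ] ℂ) : M.IsDerivation (M.ad ξ) := by
  intro a b x
  simp only [ad_apply, l_mul_apply, r_mul_apply, M.lr_comm]
  ring

noncomputable def unitProj : E →L[ℂ] E := M.l 1 ∘L M.r 1

lemma unitProj_l (b : B) (x : E) : M.unitProj (M.l b x) = M.l b (M.unitProj x) := by
  simp [unitProj, ← M.lr_comm, l_one_l, l_l_one]

lemma unitProj_r (b : B) (x : E) : M.unitProj (M.r b x) = M.r b (M.unitProj x) := by
  simp [unitProj, M.lr_comm, r_one_r, r_r_one]

lemma unitProj_unitProj (x : E) : M.unitProj (M.unitProj x) = M.unitProj x := by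
  simp [unitProj, M.lr_comm, l_one_l, r_one_r]

/-- `D` restricted to the essential part `1·E·1` of the module. -/
noncomputable def corner (D : B →L[ℂ] E →L[ℂ] ℂ) : B →L[ℂ] E →L[ℂ] ℂ :=
  (ContinuousLinearMap.compL ℂ E E ℂ).flip M.unitProj ∘L D

variable {M}

lemma IsDerivation.sub {D D' : B →L[ℂ] E →L[ℂ] ℂ} (hD : M.IsDerivation D)
    (hD' : M.IsDerivation D') : M.IsDerivation (D - D') := by
  intro a b x
  simp only [_root_.sub_apply, hD a b x, hD' a b x]
  ring

lemma IsDerivation.map_mul_eq_zero {D : B →L[ℂ] E →L[ℂ] ℂ} (hD : M.IsDerivation D) {a b : B}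
    (ha : D a = 0) (hb : D b = 0) : D (a * b) = 0 := by
  ext x
  simp [hD a b x, ha, hb]

lemma IsDerivation.apply_l_eq_apply_r {D : B →L[ℂ] E →L[ℂ] ℂ} (hD : M.IsDerivation D)
    {b c c' : B} (hc : D c = 0) (hc' : D c' = 0) (hbc : b * c = c' * b) (x : E) :
    D b (M.l c x) = D b (M.r c' x) := by
  have h₁ := hD b c x
  have h₂ := hD c' b x
  rw [hc, hbc] at h₁
  rw [hc'] at h₂
  simp only [zero_apply, add_zero, zero_add] at h₁ h₂
  rw [← h₁, h₂]

lemma corner_apply (D : B →L[ℂ] E →L[ℂ] ℂ) (b : B) (x : E) :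
    M.corner D b x = D b (M.unitProj x) := rfl

lemma corner_sub (D D' : B →L[ℂ] E →L[ℂ] ℂ) : M.corner (D - D') = M.corner D - M.corner D' := by
  ext b x; simp [corner_apply]

lemma corner_ad (ξ : E →L[ℂ] ℂ) : M.corner (M.ad ξ) = M.ad (ξ ∘L M.unitProj) := by
  ext b x; simp [corner_apply, unitProj_l, unitProj_r]

lemma corner_apply_l_one (D : B →L[ℂ] E →L[ℂ] ℂ) (b : B) (x : E) :
    M.corner D b (M.l 1 x) = M.corner D b x := by
  rw [corner_apply, corner_apply, unitProj_l, unitProj, ContinuousLinearMap.comp_apply, l_one_l]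

lemma corner_sub_ad_eq_zero {D : B →L[ℂ] E →L[ℂ] ℂ} {ψ : E →L[ℂ] ℂ} {b : B}
    (h : M.corner D b = M.ad ψ b) : M.corner (D - M.ad ψ) b = 0 := by
  ext x
  rw [corner_sub, _root_.sub_apply, _root_.sub_apply, corner_apply (M.ad ψ), ← h, corner_apply,
    corner_apply, unitProj_unitProj, sub_self, zero_apply]

lemma IsDerivation.corner {D : B →L[ℂ] E →L[ℂ] ℂ} (hD : M.IsDerivation D) :
    M.IsDerivation (M.corner D) := by
  intro a b x
  simp only [corner_apply, hD a b, unitProj_l, unitProj_r]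

lemma IsDerivation.eq_corner_add_ad {D : B →L[ℂ] E →L[ℂ] ℂ} (hD : M.IsDerivation D) :
    D = M.corner D + M.ad (2 • (D 1 ∘L M.r 1) - D 1) := by
  ext b x
  have h₁ := hD b 1 x
  have h₂ := hD 1 b (M.l 1 x)
  have h₃ := hD 1 b (M.r 1 x)
  simp only [mul_one, one_mul, l_l_one, r_r_one, ← M.lr_comm] at h₁ h₂ h₃
  rw [_root_.add_apply, _root_.add_apply, corner_apply, ad_apply]
  simp only [_root_.sub_apply, _root_.smul_apply, ContinuousLinearMap.comp_apply, unitProj,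
    r_one_r, ← M.lr_comm]
  linear_combination h₁ + h₂ - 2 * h₃

end AlgBimodule

section TwistedConvolution

variable {G A B : Type*} [DecidableEq G] [NormedRing A] [NormedAlgebra ℂ A] [NormedRing B]
  [NormedAlgebra ℂ B]

noncomputable def lpDelta (e : B ≃ₗᵢ[ℂ] lp (fun _ : G => A) 1) (g : G) : B :=
  e.symm (lp.single 1 g 1)

lemma lpDelta_apply (e : B ≃ₗᵢ[ℂ] lp (fun _ : G => A) 1) (g h : G) :
    e (lpDelta e g) h = if h = g then 1 else 0 := by
  simp [lpDelta, Pi.single_apply]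

lemma norm_lpDelta (e : B ≃ₗᵢ[ℂ] lp (fun _ : G => A) 1) (g : G) : ‖lpDelta e g‖ = ‖(1 : A)‖ := by
  rw [lpDelta, e.symm.norm_map, lp.norm_single zero_lt_one]

variable [Group G] [StarRing A]

/-- `B ≅ ℓ¹(G, A)` is the twisted convolution algebra `ℓ¹(G,A;α)` and `ι a = a δ_e`. -/
structure IsTwistedConvolution (α : G → A ≃⋆ₐ[ℂ] A) (e : B ≃ₗᵢ[ℂ] lp (fun _ : G => A) 1)
    (ι : A →ₗ[ℂ] B) : Prop where
  map_mul_apply : ∀ (g h : G) (a : A), α (g * h) a = α g (α h a)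
  mul_apply : ∀ (a b : B) (g : G), e (a * b) g = ∑' h : G, e a h * α h (e b (h⁻¹ * g))
  ι_apply : ∀ (a : A) (g : G), e (ι a) g = if g = 1 then a else 0

namespace IsTwistedConvolution

variable {α : G → A ≃⋆ₐ[ℂ] A} {e : B ≃ₗᵢ[ℂ] lp (fun _ : G => A) 1} {ι : A →ₗ[ℂ] B}

lemma map_one_apply (hB : IsTwistedConvolution α e ι) (a : A) : α 1 a = a := by
  have h := hB.map_mul_apply 1 1 a
  rw [one_mul] at h
  exact ((α 1).injective h).symm

lemma map_apply_map_inv_apply (hB : IsTwistedConvolution α e ι) (g : G) (a : A) :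
    α g (α g⁻¹ a) = a := by
  rw [← hB.map_mul_apply, mul_inv_cancel, hB.map_one_apply]

lemma mul_apply_of_eq_zero (hB : IsTwistedConvolution α e ι) {a : B} {h₀ : G}
    (ha : ∀ h ≠ h₀, e a h = 0) (b : B) (g : G) :
    e (a * b) g = e a h₀ * α h₀ (e b (h₀⁻¹ * g)) := by
  rw [hB.mul_apply, tsum_eq_single h₀ fun h hh => by rw [ha h hh, zero_mul]]

lemma ι_mul_apply (hB : IsTwistedConvolution α e ι) (a : A) (b : B) (g : G) :
    e (ι a * b) g = a * e b g := by
  rw [hB.mul_apply_of_eq_zero (h₀ := 1) (fun h hh => by rw [hB.ι_apply, if_neg hh]),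
    hB.ι_apply, if_pos rfl, inv_one, one_mul, hB.map_one_apply]

lemma lpDelta_mul_apply (hB : IsTwistedConvolution α e ι) (g : G) (b : B) (k : G) :
    e (lpDelta e g * b) k = α g (e b (g⁻¹ * k)) := by
  rw [hB.mul_apply_of_eq_zero (h₀ := g) (fun h hh => by rw [lpDelta_apply, if_neg hh]),
    lpDelta_apply, if_pos rfl, one_mul]

lemma ι_one (hB : IsTwistedConvolution α e ι) : ι 1 = 1 := by
  rw [← mul_one (ι 1)]
  exact e.injective (lp.ext (funext fun g => by rw [hB.ι_mul_apply, one_mul]))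

lemma ι_mul (hB : IsTwistedConvolution α e ι) (a b : A) : ι (a * b) = ι a * ι b :=
  e.injective (lp.ext (funext fun g => by
    rw [hB.ι_mul_apply, hB.ι_apply, hB.ι_apply]; split_ifs <;> simp))

lemma lpDelta_one (hB : IsTwistedConvolution α e ι) : lpDelta e 1 = 1 := by
  rw [← hB.ι_one]
  exact e.injective (lp.ext (funext fun g => by rw [lpDelta_apply, hB.ι_apply]))

lemma lpDelta_mul (hB : IsTwistedConvolution α e ι) (g g' : G) :
    lpDelta e g * lpDelta e g' = lpDelta e (g * g') :=
  e.injective (lp.ext (funext fun k => by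
    simp only [hB.lpDelta_mul_apply, lpDelta_apply, inv_mul_eq_iff_eq_mul]
    split_ifs <;> simp))

lemma lpDelta_mul_ι (hB : IsTwistedConvolution α e ι) (g : G) (a : A) :
    lpDelta e g * ι a = ι (α g a) * lpDelta e g :=
  e.injective (lp.ext (funext fun k => by
    simp only [hB.lpDelta_mul_apply, hB.ι_mul_apply, hB.ι_apply, lpDelta_apply, inv_mul_eq_one,
      eq_comm (a := g)]
    split_ifs <;> simp))

lemma ι_mul_lpDelta (hB : IsTwistedConvolution α e ι) (a : A) (g : G) :
    ι a * lpDelta e g = e.symm (lp.single 1 g a) :=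
  e.eq_symm_apply.mpr (lp.ext (funext fun k => by
    simp [hB.ι_mul_apply, lpDelta_apply, Pi.single_apply]))

lemma norm_ι (hB : IsTwistedConvolution α e ι) (a : A) : ‖ι a‖ = ‖a‖ := by
  rw [← mul_one (ι a), ← hB.lpDelta_one, hB.ι_mul_lpDelta, e.symm.norm_map,
    lp.norm_single zero_lt_one]

lemma dense_span_ι_mul_lpDelta (hB : IsTwistedConvolution α e ι) :
    Dense (Submodule.span ℂ (Set.range fun p : A × G => ι p.1 * lpDelta e p.2) : Set B) := by
  intro b
  have hsum : HasSum (fun g => ι (e b g) * lpDelta e g) b := by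
    simpa only [LinearIsometry.coe_toContinuousLinearMap, LinearIsometryEquiv.coe_toLinearIsometry,
      ← hB.ι_mul_lpDelta, e.symm_apply_apply] using
      e.symm.toLinearIsometry.toContinuousLinearMap.hasSum
        (lp.hasSum_single ENNReal.one_ne_top (e b))
  exact mem_closure_of_tendsto hsum (Filter.Eventually.of_forall fun s =>
    Submodule.sum_mem _ fun g _ => Submodule.subset_span ⟨(e b g, g), rfl⟩)

noncomputable def lpDeltaHom (hB : IsTwistedConvolution α e ι) : G →* B where
  toFun := lpDelta e
  map_one' := hB.lpDelta_one
  map_mul' g g' := (hB.lpDelta_mul g g').symm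

@[simp]
lemma lpDeltaHom_apply (hB : IsTwistedConvolution α e ι) (g : G) : hB.lpDeltaHom g = lpDelta e g :=
  rfl

end IsTwistedConvolution

end TwistedConvolution

structure LeftInvariantMean {S : Type*} [Mul S] (V : Submodule ℂ (S → ℂ)) where
  toLinearMap : V →ₗ[ℂ] ℂ
  exists_bound : ∃ C : ℝ, ∀ (f : V) (Cf : ℝ),
    (∀ s, ‖(f : S → ℂ) s‖ ≤ Cf) → ‖toLinearMap f‖ ≤ C * Cf
  one_mem : (1 : S → ℂ) ∈ V
  map_one : toLinearMap ⟨1, one_mem⟩ = 1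
  map_translate : ∀ (s₀ : S) (f f' : V),
    (∀ s, (f' : S → ℂ) s = (f : S → ℂ) (s₀ * s)) → toLinearMap f' = toLinearMap f

namespace BoundedContinuousFunction

variable (S : Type*) [TopologicalSpace S]

noncomputable def coeFnLinearMap : (S →ᵇ ℂ) →ₗ[ℂ] S → ℂ where
  toFun := (⇑)
  map_add' _ _ := rfl
  map_smul' _ _ := rfl

lemma coeFnLinearMap_injective : Function.Injective (coeFnLinearMap S) :=
  fun _ _ => BoundedContinuousFunction.ext ∘ congrFun

lemma coe_ofInjective_coeFnLinearMap_symm (f : LinearMap.range (coeFnLinearMap S)) :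
    ⇑((LinearEquiv.ofInjective _ (coeFnLinearMap_injective S)).symm f) = (f : S → ℂ) :=
  congrArg Subtype.val ((LinearEquiv.ofInjective _ (coeFnLinearMap_injective S)).apply_symm_apply f)

end BoundedContinuousFunction

namespace LeftInvariantMean

open BoundedContinuousFunction in
noncomputable def ofBoundedContinuous {S : Type*} [Mul S] [Nonempty S] [TopologicalSpace S]
    (m : (S →ᵇ ℂ) →L[ℂ] ℂ) (h1 : m 1 = 1)
    (hinv : ∀ (s₀ : S) (f f' : S →ᵇ ℂ), (∀ s, f' s = f (s₀ * s)) → m f' = m f) :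
    LeftInvariantMean (LinearMap.range (coeFnLinearMap S)) where
  toLinearMap := m.toLinearMap ∘ₗ (LinearEquiv.ofInjective _ (coeFnLinearMap_injective S)).symm
  exists_bound := ⟨‖m‖, fun f Cf hf => by
    have hCf : 0 ≤ Cf := (norm_nonneg _).trans (hf (Classical.arbitrary S))
    refine (m.le_opNorm _).trans (mul_le_mul_of_nonneg_left ?_ (norm_nonneg m))
    exact (norm_le hCf).mpr fun s => by
      simpa only [LinearEquiv.coe_coe, coe_ofInjective_coeFnLinearMap_symm] using hf s⟩
  one_mem := ⟨1, rfl⟩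
  map_one := by
    have h : (LinearEquiv.ofInjective _ (coeFnLinearMap_injective S)).symm ⟨1, ⟨1, rfl⟩⟩ = 1 :=
      BoundedContinuousFunction.ext fun s => by rw [coe_ofInjective_coeFnLinearMap_symm]; rfl
    simp [h, h1]
  map_translate s₀ f f' hf := hinv s₀ _ _ fun s => by
    simpa only [LinearEquiv.coe_coe, coe_ofInjective_coeFnLinearMap_symm] using hf s

end LeftInvariantMean

namespace AlgBimodule

variable {B E : Type*} [NormedRing B] [NormedAlgebra ℂ B] [NormedAddCommGroup E] [NormedSpace ℂ E]
  {M : AlgBimodule B E} {S : Type*} [Group S] {V : Submodule ℂ (S → ℂ)}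

variable (M) in
/-- The paper's `φ_{x,D}(u) = ⟨x, D u · u⁻¹⟩`, for `u = σ s`. -/
noncomputable def phi (D : B →L[ℂ] E →L[ℂ] ℂ) (σ : S →* B) : E →ₗ[ℂ] S → ℂ :=
  LinearMap.pi fun s => ((D (σ s)).comp (M.l (σ s⁻¹))).toLinearMap

lemma phi_apply (D : B →L[ℂ] E →L[ℂ] ℂ) (σ : S →* B) (x : E) (s : S) :
    M.phi D σ x s = D (σ s) (M.l (σ s⁻¹) x) := rfl

lemma phi_l_one (D : B →L[ℂ] E →L[ℂ] ℂ) (σ : S →* B) (x : E) :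
    M.phi D σ (M.l 1 x) = M.phi D σ x :=
  funext fun s => by rw [phi_apply, phi_apply, l_l_one]

variable (M) in
lemma exists_bound_phi (D : B →L[ℂ] E →L[ℂ] ℂ) {σ : S →* B} (hσ : ∃ c, ∀ s, ‖σ s‖ ≤ c) :
    ∃ C, ∀ x s, ‖M.phi D σ x s‖ ≤ C * ‖x‖ := by
  obtain ⟨c, hc⟩ := hσ
  obtain ⟨K, hK0, hK⟩ := M.bound
  have hc0 : 0 ≤ c := (norm_nonneg _).trans (hc 1)
  refine ⟨‖D‖ * c * (K * c), fun x s => ?_⟩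
  calc ‖D (σ s) (M.l (σ s⁻¹) x)‖ ≤ ‖D‖ * ‖σ s‖ * ‖M.l (σ s⁻¹) x‖ := D.le_opNorm₂ _ _
    _ ≤ ‖D‖ * c * (K * c * ‖x‖) := by
      gcongr
      · exact hc s
      · exact (hK _ x).1.trans (by gcongr; exact hc _)
    _ = ‖D‖ * c * (K * c) * ‖x‖ := by ring

lemma exists_bound_mean_phi (μ : LeftInvariantMean V) (D : B →L[ℂ] E →L[ℂ] ℂ) {σ : S →* B}
    (hσ : ∃ c, ∀ s, ‖σ s‖ ≤ c) (hmem : ∀ x, M.phi D σ x ∈ V) :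
    ∃ C, ∀ x, ‖μ.toLinearMap ⟨M.phi D σ x, hmem x⟩‖ ≤ C * ‖x‖ := by
  obtain ⟨C, hC⟩ := μ.exists_bound
  obtain ⟨C', hC'⟩ := exists_bound_phi M D hσ
  exact ⟨C * C', fun x => (hC _ _ (hC' x)).trans_eq (mul_assoc _ _ _).symm⟩

noncomputable def average (μ : LeftInvariantMean V) (D : B →L[ℂ] E →L[ℂ] ℂ) (σ : S →* B)
    (hσ : ∃ c, ∀ s, ‖σ s‖ ≤ c) (hmem : ∀ x, M.phi D σ x ∈ V) : E →L[ℂ] ℂ :=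
  (μ.toLinearMap ∘ₗ (M.phi D σ).codRestrict V hmem).mkContinuousOfExistsBound
    (exists_bound_mean_phi μ D hσ hmem)

variable {μ : LeftInvariantMean V} {D : B →L[ℂ] E →L[ℂ] ℂ} {σ : S →* B}
  {hσ : ∃ c, ∀ s, ‖σ s‖ ≤ c} {hmem : ∀ x, M.phi D σ x ∈ V}

lemma average_apply (x : E) :
    average μ D σ hσ hmem x = μ.toLinearMap ⟨M.phi D σ x, hmem x⟩ := rfl

lemma average_congr {x y : E} (h : M.phi D σ x = M.phi D σ y) :
    average μ D σ hσ hmem x = average μ D σ hσ hmem y := by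
  simp only [average_apply, h]

lemma IsDerivation.phi_mul (hD : M.IsDerivation D) (x : E) (s₀ s : S) :
    M.phi D σ x (s₀ * s) = M.phi D σ x s₀ + M.phi D σ (M.l (σ s₀⁻¹) (M.r (σ s₀) x)) s := by
  simp only [phi_apply, mul_inv_rev, map_mul, hD _ _ _, l_mul_apply, M.lr_comm]
  rw [← l_mul_apply, ← map_mul, mul_inv_cancel, map_one, l_one_l]

/-- Left invariance of `μ` applied to `φ_{x,D}(s₀ s) = φ_{x,D}(s₀) + φ_{y,D}(s)`. -/
lemma IsDerivation.average_eq_phi_add (hD : M.IsDerivation D) (s₀ : S) (x : E) :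
    average μ D σ hσ hmem x =
      M.phi D σ x s₀ + average μ D σ hσ hmem (M.l (σ s₀⁻¹) (M.r (σ s₀) x)) := by
  have h := μ.map_translate s₀ ⟨_, hmem x⟩
    (M.phi D σ x s₀ • ⟨1, μ.one_mem⟩ + ⟨_, hmem (M.l (σ s₀⁻¹) (M.r (σ s₀) x))⟩)
    fun s => by simp [hD.phi_mul]
  rw [map_add, map_smul, μ.map_one, smul_eq_mul, mul_one] at h
  rw [average_apply, average_apply, ← h]

lemma IsDerivation.apply_eq_ad_neg_average (hD : M.IsDerivation D)
    (hDl : ∀ b y, D b (M.l 1 y) = D b y) (s : S) :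
    D (σ s) = M.ad (-average μ D σ hσ hmem) (σ s) := by
  ext y
  have h := hD.average_eq_phi_add (μ := μ) (hσ := hσ) (hmem := hmem) s (M.l (σ s) y)
  rw [phi_apply, ← l_mul_apply, ← map_mul, inv_mul_cancel, map_one, hDl, ← M.lr_comm,
    ← l_mul_apply, ← map_mul, inv_mul_cancel, map_one, average_congr (phi_l_one D σ _)] at h
  rw [ad_apply, _root_.neg_apply, _root_.neg_apply]
  linear_combination -h

end AlgBimodule

section Averaging

open AlgBimodule

variable {B E : Type*} [NormedRing B] [NormedAlgebra ℂ B] [NormedAddCommGroup E] [NormedSpace ℂ E]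
  {M : AlgBimodule B E} {D : B →L[ℂ] E →L[ℂ] ℂ}

theorem AlgBimodule.IsDerivation.exists_corner_ι_eq_ad {A : Type*} [NormedRing A] [StarRing A]
    [CStarRing A] [NormedAlgebra ℂ A] [StarModule ℂ A] [CompleteSpace A]
    (hD : M.IsDerivation D) (ι : A →ₗ[ℂ] B) (hι_one : ι 1 = 1)
    (hι_mul : ∀ a b, ι (a * b) = ι a * ι b) (hι_bdd : ∃ c, ∀ a, ‖ι a‖ ≤ c * ‖a‖)
    (μ : LeftInvariantMean (FDU ι M D)) :
    ∃ ψ : E →L[ℂ] ℂ, ∀ a, M.corner D (ι a) = M.ad ψ (ι a) := by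
  let _ : CStarAlgebra A := {}
  let σ : unitary A →* B := (AlgHom.ofLinearMap ι hι_one hι_mul : A →* B).comp (unitary A).subtype
  obtain ⟨c, hc⟩ := hι_bdd
  have hσ : ∃ c', ∀ u, ‖σ u‖ ≤ c' := ⟨c * ‖(1 : A)‖, fun u => by
    show ‖ι u‖ ≤ _
    simpa only [← CStarRing.norm_coe_unitary_mul u 1, mul_one] using hc u⟩
  have hmem : ∀ x, M.phi (M.corner D) σ x ∈ FDU ι M D := fun x =>
    Submodule.subset_span (Set.mem_insert_of_mem _ ⟨M.unitProj x, funext fun u => by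
      rw [phi_apply, corner_apply, unitProj_l]; rfl⟩)
  refine ⟨-average μ (M.corner D) σ hσ hmem, fun a => LinearMap.congr_fun
    (LinearMap.ext_on (CStarAlgebra.span_unitary A) (f := (M.corner D).toLinearMap ∘ₗ ι)
      (g := (M.ad _).toLinearMap ∘ₗ ι) fun u hu => ?_) a⟩
  exact hD.corner.apply_eq_ad_neg_average (σ := σ) (corner_apply_l_one D) ⟨u, hu⟩

theorem IsTwistedConvolution.exists_corner_eq_ad {G A : Type*} [Group G] [DecidableEq G]
    [TopologicalSpace G] [DiscreteTopology G] [NormedRing A] [StarRing A] [NormedAlgebra ℂ A]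
    {α : G → A ≃⋆ₐ[ℂ] A} {e : B ≃ₗᵢ[ℂ] lp (fun _ : G => A) 1} {ι : A →ₗ[ℂ] B}
    (hB : IsTwistedConvolution α e ι)
    (μ : LeftInvariantMean (LinearMap.range (BoundedContinuousFunction.coeFnLinearMap G)))
    (hD : M.IsDerivation D) (hDι : ∀ a, M.corner D (ι a) = 0) :
    ∃ ξ : E →L[ℂ] ℂ, M.corner D = M.ad ξ := by
  have hσ : ∃ c, ∀ g, ‖hB.lpDeltaHom g‖ ≤ c := ⟨‖(1 : A)‖, fun g => (norm_lpDelta e g).le⟩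
  have hmem : ∀ x, M.phi (M.corner D) hB.lpDeltaHom x ∈
      LinearMap.range (BoundedContinuousFunction.coeFnLinearMap G) := fun x => by
    obtain ⟨C, hC⟩ := exists_bound_phi M (M.corner D) hσ
    exact ⟨BoundedContinuousFunction.ofNormedAddCommGroupDiscrete _ _ (hC x), rfl⟩
  set ξ := average μ (M.corner D) hB.lpDeltaHom hσ hmem
  have hξ : ∀ a z, ξ (M.l (ι a) z) = ξ (M.r (ι a) z) := fun a z =>
    average_congr <| funext fun g => by
      simp only [phi_apply, IsTwistedConvolution.lpDeltaHom_apply]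
      rw [← l_mul_apply, hB.lpDelta_mul_ι, l_mul_apply,
        hD.corner.apply_l_eq_apply_r (hDι _) (hDι _) (hB.lpDelta_mul_ι g _),
        hB.map_apply_map_inv_apply, ← M.lr_comm]
  refine ⟨-ξ, sub_eq_zero.mp (ContinuousLinearMap.ext_on hB.dense_span_ι_mul_lpDelta ?_)⟩
  rintro _ ⟨⟨a, g⟩, rfl⟩
  refine (hD.corner.sub (M.isDerivation_ad (-ξ))).map_mul_eq_zero ?_ ?_
  · ext z
    simp [hDι, hξ]
  · exact sub_eq_zero.mpr
      (hD.corner.apply_eq_ad_neg_average (σ := hB.lpDeltaHom) (corner_apply_l_one D) g)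

end Averaging

theorem stmt14_general {G A B E : Type*} [Group G] [DecidableEq G]
    [TopologicalSpace G] [DiscreteTopology G]
    [NormedRing A] [StarRing A] [CStarRing A] [NormedAlgebra ℂ A] [StarModule ℂ A]
    [CompleteSpace A]
    [NormedRing B] [NormedAlgebra ℂ B]
    [NormedAddCommGroup E] [NormedSpace ℂ E]
    (α : G → A ≃⋆ₐ[ℂ] A)
    (hα : ∀ g h : G, ∀ a : A, α (g * h) a = α g (α h a))
    -- the invariant functional on `ℓ^∞(G)`:
    (mG : (G →ᵇ ℂ) →L[ℂ] ℂ) (hmG1 : mG 1 = 1)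
    (hmGinv : ∀ (g₀ : G) (f f' : G →ᵇ ℂ), (∀ g : G, f' g = f (g₀ * g)) → mG f' = mG f)
    -- `B` is the twisted convolution algebra `ℓ¹(G,A;α)`:
    (e : B ≃ₗᵢ[ℂ] lp (fun _ : G => A) 1)
    (he : ∀ a b : B, ∀ g : G, e (a * b) g = ∑' h : G, e a h * α h (e b (h⁻¹ * g)))
    -- the canonical embedding `a ↦ a δ_e` of `A` into `B`:
    (ιA : A →ₗ[ℂ] B)
    (hι : ∀ (a : A) (g : G), e (ιA a) g = if g = 1 then a else 0)
    (M : AlgBimodule B E) (D : B →L[ℂ] (E →L[ℂ] ℂ))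
    (hD : ∀ a b : B, ∀ x : E, D (a * b) x = D a (M.l b x) + D b (M.r a x))
    -- the invariant functional on `F_{D,U}`:
    (m : ↥(FDU ιA M D) →ₗ[ℂ] ℂ)
    (hmbdd : ∃ C : ℝ, ∀ (f : ↥(FDU ιA M D)) (Cf : ℝ),
      (∀ u : unitary A, ‖(↑f : unitary A → ℂ) u‖ ≤ Cf) → ‖m f‖ ≤ C * Cf)
    (hm1 : ∀ f : ↥(FDU ιA M D),
      (∀ u : unitary A, (↑f : unitary A → ℂ) u = 1) → m f = 1)
    (hminv : ∀ (u₀ : unitary A) (f f' : ↥(FDU ιA M D)),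
      (∀ u : unitary A, (↑f' : unitary A → ℂ) u = (↑f : unitary A → ℂ) (u₀ * u)) →
        m f' = m f) :
    ∃ ξ : E →L[ℂ] ℂ, ∀ (b : B) (x : E), D b x = ξ (M.r b x) - ξ (M.l b x) := by
  have hB : IsTwistedConvolution α e ιA := ⟨hα, he, hι⟩
  replace hD : M.IsDerivation D := hD
  obtain ⟨ψ, hψ⟩ := hD.exists_corner_ι_eq_ad ιA hB.ι_one hB.ι_mul
    ⟨1, fun a => (hB.norm_ι a).trans_le (one_mul _).ge⟩
    ⟨m, hmbdd, Submodule.subset_span (Set.mem_insert _ _), hm1 _ fun _ => rfl, hminv⟩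
  obtain ⟨ξ, hξ⟩ := hB.exists_corner_eq_ad (.ofBoundedContinuous mG hmG1 hmGinv)
    (hD.sub (M.isDerivation_ad ψ)) fun a => AlgBimodule.corner_sub_ad_eq_zero (hψ a)
  have hD_eq : D = M.ad (2 • (D 1 ∘L M.r 1) - D 1 + (ψ ∘L M.unitProj + ξ)) :=
    calc D = M.corner D + M.ad (2 • (D 1 ∘L M.r 1) - D 1) := hD.eq_corner_add_ad
      _ = M.corner (D - M.ad ψ) + M.corner (M.ad ψ) + M.ad (2 • (D 1 ∘L M.r 1) - D 1) := by
        rw [AlgBimodule.corner_sub]; abel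
      _ = _ := by rw [hξ, AlgBimodule.corner_ad, M.ad_add, M.ad_add]; abel
  exact ⟨_, fun b x =>
    (DFunLike.congr_fun (DFunLike.congr_fun hD_eq b) x).trans (M.ad_apply _ b x)⟩

/-- let `(A,G,α)` be a C*-dynamical system with `A` unital and `G` a
discrete group carrying a left invariant normalised bounded functional on `ℓ^∞(G)`.
If `D` is a bounded derivation of `ℓ¹(G,A;α)` into a dual Banach bimodule `E*` and there
is a left `U`-invariant normalised bounded functional on the span `F_{D,U}` of the
constant `1` and the functions `φ_{x,D}(u) = ⟨x, Du·u⁻¹⟩`, then `D` is inner. -/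
theorem stmt14 {G A B E : Type*} [Group G] [DecidableEq G]
    [TopologicalSpace G] [DiscreteTopology G]
    [NormedRing A] [StarRing A] [CStarRing A] [NormedAlgebra ℂ A] [StarModule ℂ A]
    [CompleteSpace A]
    [NormedRing B] [NormedAlgebra ℂ B] [CompleteSpace B]
    [NormedAddCommGroup E] [NormedSpace ℂ E] [CompleteSpace E]
    (α : G → A ≃⋆ₐ[ℂ] A)
    (hα : ∀ g h : G, ∀ a : A, α (g * h) a = α g (α h a))
    -- the invariant functional on `ℓ^∞(G)`:
    (mG : (G →ᵇ ℂ) →L[ℂ] ℂ) (hmG1 : mG 1 = 1)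
    (hmGinv : ∀ (g₀ : G) (f f' : G →ᵇ ℂ), (∀ g : G, f' g = f (g₀ * g)) → mG f' = mG f)
    -- `B` is the twisted convolution algebra `ℓ¹(G,A;α)`:
    (e : B ≃ₗᵢ[ℂ] lp (fun _ : G => A) 1)
    (he : ∀ a b : B, ∀ g : G, e (a * b) g = ∑' h : G, e a h * α h (e b (h⁻¹ * g)))
    -- the canonical embedding `a ↦ a δ_e` of `A` into `B`:
    (ιA : A →ₗ[ℂ] B)
    (hι : ∀ (a : A) (g : G), e (ιA a) g = if g = 1 then a else 0)
    (M : AlgBimodule B E) (D : B →L[ℂ] (E →L[ℂ] ℂ))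
    (hD : ∀ a b : B, ∀ x : E, D (a * b) x = D a (M.l b x) + D b (M.r a x))
    -- the invariant functional on `F_{D,U}`:
    (m : ↥(FDU ιA M D) →ₗ[ℂ] ℂ)
    (hmbdd : ∃ C : ℝ, ∀ (f : ↥(FDU ιA M D)) (Cf : ℝ),
      (∀ u : unitary A, ‖(↑f : unitary A → ℂ) u‖ ≤ Cf) → ‖m f‖ ≤ C * Cf)
    (hm1 : ∀ f : ↥(FDU ιA M D),
      (∀ u : unitary A, (↑f : unitary A → ℂ) u = 1) → m f = 1)
    (hminv : ∀ (u₀ : unitary A) (f f' : ↥(FDU ιA M D)),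
      (∀ u : unitary A, (↑f' : unitary A → ℂ) u = (↑f : unitary A → ℂ) (u₀ * u)) →
        m f' = m f) :
    ∃ ξ : E →L[ℂ] ℂ, ∀ (b : B) (x : E), D b x = ξ (M.r b x) - ξ (M.l b x) :=
  stmt14_general α hα mG hmG1 hmGinv e he ιA hι M D hD m hmbdd hm1 hminv
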